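/- The top coefficient in the expansion of a product of derivatives of δ_+ satisfies C^{a_1,...,a_n}_{n-1+Σa_k} = (∏_{k=1}^n a_k!)/(n-1+Σ_{k=1}^n a_k)!. -/

import Mathlib

/-!
Expanding in the binomial basis, `k ^ a = ∑ j, S(a, j) j! (k choose j)` with Stirling numbers of
the second kind, and `S(a, a) = 1`. Summing products of binomial coefficients over compositions of
`N` is a Vandermonde identity,
`∑_{k₁+⋯+kₙ=N} ∏ (kᵢ choose jᵢ) = (N+n-1 choose ∑ jᵢ + n-1)`,
so the sum is a combination of the polynomials `N ↦ (N+n-1 choose ∑ jᵢ + n-1)` with `jᵢ ≤ aᵢ`.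
Only `j = a` reaches degree `n - 1 + ∑ aᵢ`, with leading coefficient `∏ aᵢ! / (n-1+∑ aᵢ)!`.
-/
open Finset Polynomial

namespace Nat

theorem descFactorial_succ_add_mul_descFactorial (k j : ℕ) :
    k.descFactorial (j + 1) + j * k.descFactorial j = k * k.descFactorial j := by
  rcases le_or_gt j k with h | h
  · rw [descFactorial_succ, ← add_mul, Nat.sub_add_cancel h]
  · simp [descFactorial_eq_zero_iff_lt.mpr h]

theorem pow_eq_sum_stirlingSecond_mul_descFactorial (k a : ℕ) :
    k ^ a = ∑ j ∈ range (a + 1), stirlingSecond a j * k.descFactorial j := by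
  induction a with
  | zero => simp
  | succ a ih =>
    have shift : ∑ j ∈ range (a + 1), j * stirlingSecond a j * k.descFactorial j =
        ∑ j ∈ range (a + 1), (j + 1) * stirlingSecond a (j + 1) * k.descFactorial (j + 1) := by
      have top : (a + 1) * stirlingSecond a (a + 1) * k.descFactorial (a + 1) = 0 := by
        rw [stirlingSecond_eq_zero_of_lt a.lt_add_one, mul_zero, zero_mul]
      rw [← add_zero (∑ j ∈ range (a + 1), _), ← top, ← sum_range_succ (fun j => j * _ * _),
        sum_range_succ', zero_mul, zero_mul, add_zero]
    calc k ^ (a + 1)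
        = ∑ j ∈ range (a + 1), (stirlingSecond a j * k.descFactorial (j + 1) +
            j * stirlingSecond a j * k.descFactorial j) := by
          rw [pow_succ', ih, mul_sum]
          refine sum_congr rfl fun j _ => ?_
          rw [mul_left_comm, ← descFactorial_succ_add_mul_descFactorial]
          ring
      _ = ∑ j ∈ range (a + 1), stirlingSecond (a + 1) (j + 1) * k.descFactorial (j + 1) := by
          rw [sum_add_distrib, shift, ← sum_add_distrib]
          refine sum_congr rfl fun j _ => ?_
          rw [stirlingSecond_succ_succ]
          ring
      _ = ∑ j ∈ range (a + 2), stirlingSecond (a + 1) j * k.descFactorial j := by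
          rw [sum_range_succ' _ (a + 1), stirlingSecond_succ_zero, zero_mul, add_zero]

theorem sum_antidiagonal_choose_mul_choose_add {m b : ℕ} (hmb : m ≤ b) (a N : ℕ) :
    ∑ p ∈ antidiagonal N, p.1.choose a * (p.2 + m).choose b = (N + m + 1).choose (a + b + 1) := by
  induction N generalizing a with
  | zero =>
    cases a with
    | zero => simp [choose_succ_succ, choose_eq_zero_of_lt (lt_succ_of_le hmb)]
    | succ a =>
      rw [choose_eq_zero_of_lt (by omega)]
      simp
  | succ N ih =>
    rw [Finset.Nat.sum_antidiagonal_succ]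
    cases a with
    | zero =>
      have := ih 0
      simp only [choose_zero_right, one_mul, zero_add] at this ⊢
      rw [this, add_right_comm N 1 m, choose_succ_succ' (N + m + 1)]
    | succ a =>
      simp_rw [choose_zero_succ, zero_mul, zero_add, choose_succ_succ' _ a, add_mul,
        sum_add_distrib, ih]
      rw [add_right_comm N 1 m, choose_succ_succ' (N + m + 1), add_right_comm a 1 b]

end Nat

theorem Finset.Nat.sum_antidiagonalTuple_succ {M : Type*} [AddCommMonoid M] (k N : ℕ)
    (f : (Fin (k + 1) → ℕ) → M) :
    ∑ t ∈ antidiagonalTuple (k + 1) N, f t =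
      ∑ p ∈ antidiagonal N, ∑ t ∈ antidiagonalTuple k p.2, f (Fin.cons p.1 t) := by
  -- `finAntidiagonal` is defined by exactly this recursion.
  have h : ∀ k N, antidiagonalTuple k N = finAntidiagonal k N := fun k N => by
    ext; rw [mem_antidiagonalTuple, mem_finAntidiagonal]
  simp only [h]
  rw [finAntidiagonal, finAntidiagonal.aux, sum_disjiUnion]
  simp only [sum_map]
  rfl

theorem Finset.Nat.sum_antidiagonalTuple_prod_choose (m : ℕ) (j : Fin (m + 1) → ℕ) (N : ℕ) :
    ∑ t ∈ antidiagonalTuple (m + 1) N, ∏ i, (t i).choose (j i) =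
      (N + m).choose (∑ i, j i + m) := by
  induction m generalizing N with
  | zero => simp
  | succ m ih =>
    rw [sum_antidiagonalTuple_succ]
    simp_rw [Fin.prod_univ_succ (n := m + 1), Fin.cons_zero, Fin.cons_succ, ← mul_sum, ih,
      Nat.sum_antidiagonal_choose_mul_choose_add (Nat.le_add_left m _), Fin.sum_univ_succ]
    ring_nf

theorem Finset.Nat.sum_antidiagonalTuple_prod_pow (m : ℕ) (a : Fin (m + 1) → ℕ) (N : ℕ) :
    ∑ t ∈ antidiagonalTuple (m + 1) N, ∏ i, t i ^ a i =
      ∑ j ∈ Fintype.piFinset fun i => range (a i + 1),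
        (∏ i, (a i).stirlingSecond (j i) * (j i).factorial) * (N + m).choose (∑ i, j i + m) := by
  simp_rw [Nat.pow_eq_sum_stirlingSecond_mul_descFactorial,
    Nat.descFactorial_eq_factorial_mul_choose, prod_univ_sum]
  rw [sum_comm]
  refine sum_congr rfl fun j _ => ?_
  simp_rw [← mul_assoc, prod_mul_distrib, ← mul_sum, sum_antidiagonalTuple_prod_choose]

namespace Polynomial

noncomputable def shiftedBinomial (K : Type*) [Field K] (m d : ℕ) : K[X] :=
  C (d.factorial : K)⁻¹ * (descPochhammer K d).comp (X + C (m : K))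

variable {K : Type*} [Field K]

theorem eval_shiftedBinomial [CharZero K] (m d N : ℕ) :
    (shiftedBinomial K m d).eval (N : K) = ((N + m).choose d : K) := by
  rw [shiftedBinomial, eval_mul, eval_C, eval_comp, eval_add, eval_X, eval_C, ← Nat.cast_add,
    descPochhammer_eval_eq_descFactorial, Nat.descFactorial_eq_factorial_mul_choose, Nat.cast_mul,
    inv_mul_cancel_left₀ (by exact_mod_cast d.factorial_ne_zero)]

theorem natDegree_descPochhammer_comp_X_add_C (r : K) (d : ℕ) :
    ((descPochhammer K d).comp (X + C r)).natDegree = d := by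
  rw [natDegree_comp, descPochhammer_natDegree, natDegree_X_add_C, mul_one]

theorem natDegree_shiftedBinomial_le (m d : ℕ) : (shiftedBinomial K m d).natDegree ≤ d :=
  (natDegree_C_mul_le _ _).trans (natDegree_descPochhammer_comp_X_add_C _ d).le

theorem coeff_shiftedBinomial_self (m d : ℕ) :
    (shiftedBinomial K m d).coeff d = (d.factorial : K)⁻¹ := by
  have hlead := ((monic_descPochhammer K d).comp_X_add_C (m : K)).coeff_natDegree
  rw [natDegree_descPochhammer_comp_X_add_C] at hlead
  rw [shiftedBinomial, coeff_C_mul, hlead, mul_one]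

end Polynomial

theorem delta_plus_top_coefficient_general (n : ℕ) (hn : 1 ≤ n) (a : Fin n → ℕ)
    (p : Polynomial ℚ)
    (hp : ∀ N : ℕ, p.eval (N : ℚ) =
        ∑ t ∈ Finset.Nat.antidiagonalTuple n N, ∏ i : Fin n, (t i : ℚ) ^ a i) :
    p.coeff (n - 1 + ∑ i, a i) =
      ((∏ i, (a i).factorial : ℕ) : ℚ) / (((n - 1 + ∑ i, a i).factorial : ℕ) : ℚ) := by
  obtain ⟨m, rfl⟩ : ∃ m, n = m + 1 := ⟨n - 1, by omega⟩
  rw [Nat.add_sub_cancel]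
  set J := Fintype.piFinset fun i => range (a i + 1)
  have hp_eq : p = ∑ j ∈ J, C ((∏ i, (a i).stirlingSecond (j i) * (j i).factorial : ℕ) : ℚ) *
      shiftedBinomial ℚ m (∑ i, j i + m) := by
    refine eq_of_infinite_eval_eq _ _ (Set.infinite_of_injective_forall_mem Nat.cast_injective
      fun N => ?_)
    simp only [Set.mem_ofPred_eq, hp, eval_finsetSum, eval_mul, eval_C, eval_shiftedBinomial]
    exact_mod_cast Finset.Nat.sum_antidiagonalTuple_prod_pow m a N
  have a_mem : a ∈ J := Fintype.mem_piFinset.mpr fun i => self_mem_range_succ (a i)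
  have degree_lt : ∀ j ∈ J, j ≠ a → ∑ i, j i + m < m + ∑ i, a i := fun j hj hja => by
    have hle : j ≤ a := fun i => Nat.lt_succ_iff.mp (mem_range.mp (Fintype.mem_piFinset.mp hj i))
    have : ∑ i, j i < ∑ i, a i := Fintype.sum_strictMono (lt_of_le_of_ne hle hja)
    omega
  rw [hp_eq, finsetSum_coeff, sum_eq_single_of_mem a a_mem fun j hj hja => by
    rw [coeff_C_mul, coeff_eq_zero_of_natDegree_lt ((natDegree_shiftedBinomial_le m _).trans_lt
      (degree_lt j hj hja)), mul_zero]]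
  rw [coeff_C_mul, add_comm (∑ i, a i), coeff_shiftedBinomial_self]
  simp [Nat.stirlingSecond_self, div_eq_mul_inv]

/-- The top coefficient satisfies
`C^{a₁,...,aₙ}_{n-1+∑aₖ} = (∏ aₖ!)/(n-1+∑aₖ)!`, where `C^{a₁,...,aₙ}_{n-1+∑aₖ}` equals the top
coefficient of the polynomial `C̃(N) = ∑_{k₁+...+kₙ=N} ∏ kᵢ^{aᵢ}` in `N`. -/
theorem delta_plus_top_coefficient (n : ℕ) (hn : 1 ≤ n) (a : Fin n → ℕ) (ha : ∀ i, 1 ≤ a i)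
    (p : Polynomial ℚ)
    (hp : ∀ N : ℕ, p.eval (N : ℚ) =
        ∑ t ∈ Finset.Nat.antidiagonalTuple n N, ∏ i : Fin n, (t i : ℚ) ^ a i) :
    p.coeff (n - 1 + ∑ i, a i) =
      ((∏ i, (a i).factorial : ℕ) : ℚ) / (((n - 1 + ∑ i, a i).factorial : ℕ) : ℚ) :=
  delta_plus_top_coefficient_general n hn a p hp
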